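/- arXiv:1606.02898 — 2 statements merged into one kernel-verified Lean document; each statement's English description precedes it below -/
import Mathlib

section
/- Let p > 5, γ < 0, ω > 0, and let (α,β) satisfy α > 0, 2α−β ≥ 0 and 2α+β ≥ 0. Let (φ_n) be a sequence of nonzero H¹(ℝ) functions such that sup_n ‖φ_n‖_{L²} < ∞ and ‖∂ₓφ_n‖_{L²} → 0 as n → ∞. Then there exists N such that K^{α,β}_{ω,γ}(φ_n) > 0 for all n ≥ N. -/
/-!
Write `M = ‖φ‖²_{L²}` and `G = ‖∂ₓφ‖²_{L²}`. Cauchy–Schwarz on `φ(t) - φ(x) = ∫ₓᵗ ∂ₓφ` gives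
`|φ(t) - φ(x)| ≤ √(t - x) √G`, so `|φ| ≥ |φ(x)| / 2` on an interval of length `|φ(x)|² / (4G)`,
and comparing with `M` yields `‖φ‖⁴_∞ ≤ 16 M G`. Hence `‖φ‖^{p+1}_{L^{p+1}} ≤ ‖φ‖^{p-1}_∞ M` is
bounded both by `(16 M G)^{(p-1)/4} M` and by `16 M² (16 M G)^{(p-5)/4} G`; along the sequence
(`M` bounded, `G → 0`, `p > 5`) this is `ε · min(G, M)` with `ε → 0`. The quadratic part of `K`
is at least `max((2α-β)/4, ω(2α+β)/2) · min(G, M)` with a positive coefficient, and the point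
term `-γα|φ(0)|²` is nonnegative.
-/

open MeasureTheory Real Filter Topology

/-- `φ : ℝ → ℂ` lies in `H¹(ℝ)`: `φ ∈ L²(ℝ)` together with a weak derivative
`dx ∈ L²(ℝ)` such that `φ x = φ 0 + ∫₀ˣ dx (t) dt` for all `x`. -/
structure H1 where
  toFun : ℝ → ℂ
  dx : ℝ → ℂ
  memL2 : MemLp toFun 2 (volume : Measure ℝ)
  dx_memL2 : MemLp dx 2 (volume : Measure ℝ)
  eq_int : ∀ x : ℝ, toFun x = toFun 0 + ∫ t in (0:ℝ)..x, dx t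

/-- `‖∂ₓφ‖²_{L²}` -/
noncomputable def gradSq (φ : H1) : ℝ := ∫ x : ℝ, ‖φ.dx x‖ ^ 2

/-- `‖φ‖²_{L²}` -/
noncomputable def massSq (φ : H1) : ℝ := ∫ x : ℝ, ‖φ.toFun x‖ ^ 2

/-- `‖φ‖^{p+1}_{L^{p+1}}` -/
noncomputable def lpPow (p : ℝ) (φ : H1) : ℝ := ∫ x : ℝ, ‖φ.toFun x‖ ^ (p + 1)

/-- The action `S_{ω,μ}(φ) = (1/4)‖∂ₓφ‖²_{L²} − (μ/2)|φ(0)|² + (ω/2)‖φ‖²_{L²}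
− (1/(p+1))‖φ‖^{p+1}_{L^{p+1}}`. -/
noncomputable def Sfun (p ω μ : ℝ) (φ : H1) : ℝ :=
  (1/4) * gradSq φ - (μ/2) * ‖φ.toFun 0‖ ^ 2 + (ω/2) * massSq φ - (1/(p+1)) * lpPow p φ

/-- The virial functional `P_μ(φ) = (1/2)‖∂ₓφ‖²_{L²} − (μ/2)|φ(0)|²
− ((p−1)/(2(p+1)))‖φ‖^{p+1}_{L^{p+1}}`. -/
noncomputable def Pfun (p μ : ℝ) (φ : H1) : ℝ :=
  (1/2) * gradSq φ - (μ/2) * ‖φ.toFun 0‖ ^ 2 - ((p-1)/(2*(p+1))) * lpPow p φ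

/-- The Nehari functional `I_{ω,γ}(φ) = (1/2)‖∂ₓφ‖²_{L²} − γ|φ(0)|² + ω‖φ‖²_{L²}
− ‖φ‖^{p+1}_{L^{p+1}}`. -/
noncomputable def Ifun (p ω γ : ℝ) (φ : H1) : ℝ :=
  (1/2) * gradSq φ - γ * ‖φ.toFun 0‖ ^ 2 + ω * massSq φ - lpPow p φ

/-- `K^{α,β}_{ω,γ}`. -/
noncomputable def Kfun (p ω γ α β : ℝ) (φ : H1) : ℝ :=
  ((2*α-β)/4) * gradSq φ + (ω*(2*α+β)/2) * massSq φ - γ*α*‖φ.toFun 0‖ ^ 2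
    - (((p+1)*α+β)/(p+1)) * lpPow p φ

/-- `J^{α,β}_{ω,γ}(φ) = S_{ω,γ}(φ) − K^{α,β}_{ω,γ}(φ)/μ̄` with `μ̄ = max(2α−β, 2α+β)`. -/
noncomputable def Jfun (p ω γ α β : ℝ) (φ : H1) : ℝ :=
  Sfun p ω γ φ - Kfun p ω γ α β φ / max (2*α-β) (2*α+β)

/-- The mass `M(φ) = (1/2)‖φ‖²_{L²}`. -/
noncomputable def Mfun (φ : H1) : ℝ := (1/2) * massSq φ

/-- The energy `E_μ(φ) = (1/4)‖∂ₓφ‖²_{L²} − (μ/2)|φ(0)|² − (1/(p+1))‖φ‖^{p+1}_{L^{p+1}}`. -/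
noncomputable def Efun (p μ : ℝ) (φ : H1) : ℝ :=
  (1/4) * gradSq φ - (μ/2) * ‖φ.toFun 0‖ ^ 2 - (1/(p+1)) * lpPow p φ

/-- `n_ω`: infimum of `S_{ω,γ}` over nonzero `H¹(ℝ)` functions with `P_γ = 0`. -/
noncomputable def nOmega (p γ ω : ℝ) : ℝ :=
  sInf {s : ℝ | ∃ φ : H1, φ.toFun ≠ 0 ∧ Pfun p γ φ = 0 ∧ Sfun p ω γ φ = s}

/-- `r_ω`: infimum of `S_{ω,γ}` over nonzero even `H¹(ℝ)` functions with `P_γ = 0`. -/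
noncomputable def rOmega (p γ ω : ℝ) : ℝ :=
  sInf {s : ℝ | ∃ φ : H1, φ.toFun ≠ 0 ∧ (∀ x, φ.toFun (-x) = φ.toFun x) ∧
    Pfun p γ φ = 0 ∧ Sfun p ω γ φ = s}

/-- `l_ω`: infimum of `S_{ω,0}` over nonzero `H¹(ℝ)` functions with `P_0 = 0`. -/
noncomputable def lOmega (p ω : ℝ) : ℝ :=
  sInf {s : ℝ | ∃ φ : H1, φ.toFun ≠ 0 ∧ Pfun p 0 φ = 0 ∧ Sfun p ω 0 φ = s}

/-- The inverse hyperbolic tangent. -/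
noncomputable def artanh (x : ℝ) : ℝ := (1/2) * Real.log ((1+x)/(1-x))

/-- The standing-wave profile
`Q_{ω,γ}(x) = ( ((p+1)ω/2)·sech²( ((p−1)√ω/√2)|x| + artanh(γ/√(2ω)) ) )^{1/(p−1)}`. -/
noncomputable def Qsol (p γ ω : ℝ) : ℝ → ℝ := fun x =>
  (((p+1)*ω/2) *
    (1 / Real.cosh (((p-1)*Real.sqrt ω/Real.sqrt 2) * |x| + _root_.artanh (γ / Real.sqrt (2*ω)))) ^ 2)
  ^ (1/(p-1))

/-- The free ground state `Q_{1,0}(x) = ( ((p+1)/2)·sech²( ((p−1)/√2)x ) )^{1/(p−1)}`. -/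
noncomputable def Qfree (p : ℝ) : ℝ → ℝ := fun x =>
  (((p+1)/2) * (1 / Real.cosh (((p-1)/Real.sqrt 2) * x)) ^ 2) ^ (1/(p-1))

/-- `‖φ‖²_𝓗 = (1/4)‖∂ₓφ‖²_{L²} + (ω/2)‖φ‖²_{L²} − (γ/2)|φ(0)|²`. -/
noncomputable def HnormSq (ω γ : ℝ) (φ : H1) : ℝ :=
  (1/4) * gradSq φ + (ω/2) * massSq φ - (γ/2) * ‖φ.toFun 0‖ ^ 2

lemma massSq_nonneg (φ : H1) : 0 ≤ massSq φ :=
  integral_nonneg fun _ => by positivity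

lemma gradSq_nonneg (φ : H1) : 0 ≤ gradSq φ :=
  integral_nonneg fun _ => by positivity

namespace H1

variable (φ : H1)

lemma integrable_norm_sq : Integrable (fun x => ‖φ.toFun x‖ ^ 2) :=
  φ.memL2.norm.integrable_sq

lemma integrable_norm_dx_sq : Integrable (fun x => ‖φ.dx x‖ ^ 2) :=
  φ.dx_memL2.norm.integrable_sq

lemma intervalIntegrable_dx (a b : ℝ) : IntervalIntegrable φ.dx volume a b :=
  intervalIntegrable_iff.2 <|
    ((φ.dx_memL2.locallyIntegrable one_le_two).integrableOn_isCompact isCompact_uIcc).mono_set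
      Set.uIoc_subset_uIcc

lemma sub_eq_integral_dx (a b : ℝ) : φ.toFun b - φ.toFun a = ∫ t in a..b, φ.dx t := by
  rw [φ.eq_int a, φ.eq_int b, add_sub_add_left_eq_sub,
    intervalIntegral.integral_interval_sub_left (φ.intervalIntegrable_dx 0 b)
      (φ.intervalIntegrable_dx 0 a)]

lemma norm_sub_le_sqrt_mul_sqrt_gradSq {a b : ℝ} (hab : a ≤ b) :
    ‖φ.toFun b - φ.toFun a‖ ≤ √(b - a) * √(gradSq φ) := by
  have : IsFiniteMeasure (volume.restrict (Set.Ioc a b)) := ⟨by simp⟩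
  have hCS := integral_mul_le_Lp_mul_Lq_of_nonneg (μ := volume.restrict (Set.Ioc a b))
    Real.HolderConjugate.two_two (.of_forall fun t => norm_nonneg (φ.dx t))
    (.of_forall fun _ => zero_le_one) (by simpa using φ.dx_memL2.norm.restrict _)
    (by simpa using memLp_const (1 : ℝ))
  simp only [mul_one, Real.rpow_two, one_pow, setIntegral_const, smul_eq_mul,
    Real.volume_real_Ioc_of_le hab, ← Real.sqrt_eq_rpow] at hCS
  have hG : ∫ t in Set.Ioc a b, ‖φ.dx t‖ ^ 2 ≤ gradSq φ :=
    setIntegral_le_integral φ.integrable_norm_dx_sq (.of_forall fun _ => by positivity)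
  calc ‖φ.toFun b - φ.toFun a‖ ≤ ∫ t in Set.Ioc a b, ‖φ.dx t‖ := by
        rw [φ.sub_eq_integral_dx, intervalIntegral.integral_of_le hab]
        exact norm_integral_le_integral_norm _
    _ ≤ √(∫ t in Set.Ioc a b, ‖φ.dx t‖ ^ 2) * √(b - a) := hCS
    _ ≤ √(b - a) * √(gradSq φ) := by
        rw [mul_comm]; gcongr

lemma mul_sq_le_massSq {x δ c : ℝ} (hδ : 0 ≤ δ) (hc : 0 ≤ c)
    (h : ∀ t ∈ Set.Ioc x (x + δ), c ≤ ‖φ.toFun t‖) : δ * c ^ 2 ≤ massSq φ :=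
  calc δ * c ^ 2 ≤ ∫ t in Set.Ioc x (x + δ), ‖φ.toFun t‖ ^ 2 := by
        have := setIntegral_ge_of_const_le_real measurableSet_Ioc measure_Ioc_lt_top.ne
          (fun t ht => pow_le_pow_left₀ hc (h t ht) 2) φ.integrable_norm_sq.integrableOn
        rwa [Real.volume_real_Ioc_of_le (by linarith), add_sub_cancel_left, mul_comm] at this
    _ ≤ massSq φ :=
        setIntegral_le_integral φ.integrable_norm_sq (.of_forall fun _ => by positivity)

lemma mul_sq_sub_le_massSq (x : ℝ) {δ : ℝ} (hδ : 0 ≤ δ)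
    (h : √δ * √(gradSq φ) ≤ ‖φ.toFun x‖) :
    δ * (‖φ.toFun x‖ - √δ * √(gradSq φ)) ^ 2 ≤ massSq φ := by
  refine φ.mul_sq_le_massSq (x := x) hδ (sub_nonneg.2 h) fun t ht => ?_
  have hHolder := φ.norm_sub_le_sqrt_mul_sqrt_gradSq ht.1.le
  have hlen : √(t - x) ≤ √δ := Real.sqrt_le_sqrt (by linarith [ht.2])
  have htri := norm_sub_norm_le (φ.toFun x) (φ.toFun t)
  rw [norm_sub_rev] at htri
  nlinarith [Real.sqrt_nonneg (gradSq φ)]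

lemma norm_pow_four_le (x : ℝ) : ‖φ.toFun x‖ ^ 4 ≤ 16 * massSq φ * gradSq φ := by
  set a := ‖φ.toFun x‖
  rcases (gradSq_nonneg φ).eq_or_lt with hG | hG
  · have hmass : ∀ δ, 0 ≤ δ → δ * a ^ 2 ≤ massSq φ := fun δ hδ => by
      simpa [← hG] using φ.mul_sq_sub_le_massSq x hδ (by simp [← hG])
    have ha : a = 0 := by
      by_contra ha
      have ha2 : 0 < a ^ 2 := by positivity
      have := hmass ((massSq φ + 1) / a ^ 2) (by positivity [massSq_nonneg φ])
      rw [div_mul_cancel₀ _ ha2.ne'] at this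
      linarith
    simp [ha, ← hG]
  · set δ := a ^ 2 / (4 * gradSq φ)
    have hhalf : √δ * √(gradSq φ) = a / 2 := by
      rw [← Real.sqrt_mul (by positivity), show δ * gradSq φ = (a / 2) ^ 2 by
        simp only [δ]; field_simp; ring, Real.sqrt_sq (by positivity)]
    have := φ.mul_sq_sub_le_massSq x (δ := δ) (by positivity)
      (by rw [hhalf]; linarith [norm_nonneg (φ.toFun x)])
    rw [hhalf, show δ * (a - a / 2) ^ 2 = a ^ 4 / (16 * gradSq φ) by
      simp only [δ]; field_simp; ring, div_le_iff₀ (by positivity)] at this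
    linarith

lemma massSq_mul_gradSq_pos (hφ : φ.toFun ≠ 0) : 0 < massSq φ * gradSq φ := by
  refine (mul_nonneg (massSq_nonneg φ) (gradSq_nonneg φ)).lt_of_ne' fun h =>
    hφ (funext fun x => ?_)
  have := φ.norm_pow_four_le x
  rw [mul_assoc, h, mul_zero] at this
  simpa using le_antisymm this (by positivity)

end H1

lemma lpPow_le_rpow_mul_massSq {p B : ℝ} (hp : 1 ≤ p) (φ : H1) (hB : ∀ x, ‖φ.toFun x‖ ^ 4 ≤ B) :
    lpPow p φ ≤ B ^ ((p - 1) / 4) * massSq φ := by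
  have hpt : ∀ x, ‖φ.toFun x‖ ^ (p + 1) ≤ B ^ ((p - 1) / 4) * ‖φ.toFun x‖ ^ 2 := fun x => by
    set b := ‖φ.toFun x‖
    have hb : b ^ (p - 1) ≤ B ^ ((p - 1) / 4) := by
      have hb4 : b ^ (p - 1) = (b ^ 4) ^ ((p - 1) / 4) := by
        rw [← Real.rpow_natCast, ← Real.rpow_mul (norm_nonneg _)]
        congr 1
        ring
      rw [hb4]
      exact Real.rpow_le_rpow (by positivity) (hB x) (by linarith)
    calc b ^ (p + 1) = b ^ (p - 1) * b ^ (2 : ℝ) := by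
          rw [← Real.rpow_add' (norm_nonneg _) (by linarith)]; congr 1; ring
      _ ≤ B ^ ((p - 1) / 4) * b ^ 2 := by rw [Real.rpow_two]; gcongr
  unfold lpPow massSq
  rw [← integral_const_mul]
  exact integral_mono_of_nonneg (.of_forall fun _ => by positivity)
    (φ.integrable_norm_sq.const_mul _) (.of_forall hpt)

lemma lpPow_le_mul_gradSq {p : ℝ} (hp : 5 ≤ p) (φ : H1) :
    lpPow p φ ≤
      16 * massSq φ ^ 2 * (16 * massSq φ * gradSq φ) ^ ((p - 5) / 4) * gradSq φ := by
  have hB : 0 ≤ 16 * massSq φ * gradSq φ := by positivity [massSq_nonneg φ, gradSq_nonneg φ]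
  calc lpPow p φ ≤ (16 * massSq φ * gradSq φ) ^ ((p - 1) / 4) * massSq φ :=
        lpPow_le_rpow_mul_massSq (by linarith) φ φ.norm_pow_four_le
    _ = _ := by
        rw [show (p - 1) / 4 = (p - 5) / 4 + 1 by ring, Real.rpow_add' hB (by linarith),
          Real.rpow_one]
        ring

lemma lpPow_le_mul_min {p C : ℝ} (hp : 5 ≤ p) (φ : H1) (hC : massSq φ ≤ C) :
    lpPow p φ ≤ max ((16 * massSq φ * gradSq φ) ^ ((p - 1) / 4))
      (16 * C ^ 2 * (16 * massSq φ * gradSq φ) ^ ((p - 5) / 4)) * min (gradSq φ) (massSq φ) := by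
  have hM := massSq_nonneg φ
  rw [mul_min_of_nonneg _ _ (by positivity [gradSq_nonneg φ])]
  refine le_min ((lpPow_le_mul_gradSq hp φ).trans ?_)
    ((lpPow_le_rpow_mul_massSq (by linarith) φ φ.norm_pow_four_le).trans ?_)
  · gcongr
    · exact gradSq_nonneg φ
    · exact le_max_of_le_right (by gcongr; positivity [gradSq_nonneg φ])
  · gcongr
    exact le_max_left _ _

lemma exists_tendsto_zero_lpPow_le_mul_min {p C : ℝ} (hp : 5 < p) {φ : ℕ → H1}
    (hC : ∀ n, massSq (φ n) ≤ C) (hgrad : Tendsto (fun n => gradSq (φ n)) atTop (𝓝 0)) :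
    ∃ ε : ℕ → ℝ, Tendsto ε atTop (𝓝 0) ∧
      ∀ n, lpPow p (φ n) ≤ ε n * min (gradSq (φ n)) (massSq (φ n)) := by
  set B : ℕ → ℝ := fun n => 16 * massSq (φ n) * gradSq (φ n)
  have hB : Tendsto B atTop (𝓝 0) :=
    squeeze_zero (g := fun n => 16 * C * gradSq (φ n))
      (fun n => by positivity [massSq_nonneg (φ n), gradSq_nonneg (φ n)])
      (fun n => mul_le_mul_of_nonneg_right (by linarith [hC n]) (gradSq_nonneg _))
      (by simpa using hgrad.const_mul (16 * C))
  refine ⟨fun n => max (B n ^ ((p - 1) / 4)) (16 * C ^ 2 * B n ^ ((p - 5) / 4)), ?_,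
    fun n => lpPow_le_mul_min hp.le (φ n) (hC n)⟩
  have h1 := hB.rpow_const (p := (p - 1) / 4) (Or.inr (by linarith))
  have h5 := (hB.rpow_const (p := (p - 5) / 4) (Or.inr (by linarith))).const_mul (16 * C ^ 2)
  rw [Real.zero_rpow (by linarith)] at h1 h5
  simpa using h1.max h5

lemma max_mul_min_le_add_mul {a b x y : ℝ} (ha : 0 ≤ a) (hb : 0 ≤ b) (hx : 0 ≤ x) (hy : 0 ≤ y) :
    max a b * min x y ≤ a * x + b * y := by
  rcases le_total a b with hab | hab <;> rcases le_total x y with hxy | hxy <;>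
    simp only [max_eq_left, max_eq_right, min_eq_left, min_eq_right, hab, hxy] <;> nlinarith

lemma Kfun_pos_of_lpPow_le_mul_min {p ω γ α β ε : ℝ} {φ : H1} (hγα : γ * α ≤ 0)
    (ha : 0 ≤ (2*α-β)/4) (hb : 0 ≤ ω*(2*α+β)/2) (hc : 0 ≤ ((p+1)*α+β)/(p+1))
    (hMG : 0 < massSq φ * gradSq φ)
    (hlp : lpPow p φ ≤ ε * min (gradSq φ) (massSq φ))
    (hε : ((p+1)*α+β)/(p+1) * ε < max ((2*α-β)/4) (ω*(2*α+β)/2)) :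
    0 < Kfun p ω γ α β φ := by
  have hM := massSq_nonneg φ
  have hG := gradSq_nonneg φ
  have hmin : 0 < min (gradSq φ) (massSq φ) :=
    lt_min (pos_of_mul_pos_right hMG hM) (pos_of_mul_pos_left hMG hG)
  have hpoint := mul_nonpos_of_nonpos_of_nonneg hγα (sq_nonneg ‖φ.toFun 0‖)
  have hquad := max_mul_min_le_add_mul ha hb hG hM
  have hlp' := mul_le_mul_of_nonneg_left hlp hc
  have := mul_pos (sub_pos.2 hε) hmin
  unfold Kfun
  nlinarith

/-- If `(φ_n)` are nonzero `H¹` functions, bounded in `L²`, with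
`‖∂ₓφ_n‖_{L²} → 0`, then `K^{α,β}_{ω,γ}(φ_n) > 0` for all large `n`. -/
theorem K_pos_near_origin (p γ ω α β : ℝ) (hp : 5 < p) (hγ : γ < 0) (hω : 0 < ω)
    (hα : 0 < α) (hβ1 : 0 ≤ 2*α - β) (hβ2 : 0 ≤ 2*α + β)
    (φ : ℕ → H1) (hne : ∀ n, (φ n).toFun ≠ 0)
    (hbd : ∃ C : ℝ, ∀ n, massSq (φ n) ≤ C)
    (hgrad : Tendsto (fun n => gradSq (φ n)) atTop (𝓝 0)) :
    ∃ N : ℕ, ∀ n ≥ N, 0 < Kfun p ω γ α β (φ n) := by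
  obtain ⟨C, hC⟩ := hbd
  obtain ⟨ε, hε, hlp⟩ := exists_tendsto_zero_lpPow_le_mul_min hp hC hgrad
  have hquad : 0 < max ((2*α-β)/4) (ω*(2*α+β)/2) := by
    rcases hβ1.eq_or_lt with h | h
    · exact lt_max_of_lt_right (div_pos (mul_pos hω (by linarith)) two_pos)
    · exact lt_max_of_lt_left (div_pos h four_pos)
  have hc : 0 ≤ ((p+1)*α+β)/(p+1) := div_nonneg (by nlinarith) (by linarith)
  have hcε : Tendsto (fun n => ((p+1)*α+β)/(p+1) * ε n) atTop (𝓝 0) := by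
    simpa using hε.const_mul (((p+1)*α+β)/(p+1))
  obtain ⟨N, hN⟩ := eventually_atTop.1 (hcε.eventually_lt_const hquad)
  exact ⟨N, fun n hn => Kfun_pos_of_lpPow_le_mul_min (by nlinarith) (div_nonneg hβ1 zero_le_four)
    (by positivity) hc ((φ n).massSq_mul_gradSq_pos (hne n)) (hlp n) (hN n hn)⟩
end

section
/- Let p > 5, γ < 0, ω > 0, let k ≥ 0 be an integer, let φ_0, …, φ_k ∈ H¹(ℝ), and let δ, ε > 0 with 2ε < δ. Suppose that S_{ω,γ}(Σ_{l=0}^k φ_l) ≤ n_ω − δ, S_{ω,γ}(Σ_{l=0}^k φ_l) ≥ Σ_{l=0}^k S_{ω,γ}(φ_l) − ε, I_{ω,γ}(Σ_{l=0}^k φ_l) ≥ −ε, and I_{ω,γ}(Σ_{l=0}^k φ_l) ≤ Σ_{l=0}^k I_{ω,γ}(φ_l) + ε. Then for every l ∈ {0, …, k}: 0 ≤ S_{ω,γ}(φ_l) < n_ω and I_{ω,γ}(φ_l) ≥ 0. -/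
open MeasureTheory Real Filter Topology

/-! If `I(ψ) < 0`, every amplitude rescaling satisfies
`S(c ψ) = |c|² I(ψ)/2 + ‖ψ‖^{p+1}_{L^{p+1}} (|c|²/2 - |c|^{p+1}/(p+1)) ≤ C ‖ψ‖^{p+1}_{L^{p+1}}`
with `C = (p-1)/(2(p+1))` (Young's inequality), and one `c ≠ 0` puts `c ψ` on `{P = 0}`; hence
`n_ω ≤ C ‖ψ‖^{p+1}_{L^{p+1}} = S(ψ) - I(ψ)/2`. The hypotheses give
`Σ_l (S(φ_l) - I(φ_l)/2) ≤ n_ω - δ + 2ε < n_ω`, so no `φ_l` has `I(φ_l) < 0`. For `p ≥ 5` the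
action is nonnegative on `{P = 0}`, so `n_ω` is a genuine infimum and not the junk value `sInf` takes
on sets unbounded below. -/

namespace H1

instance : SMul ℂ H1 where
  smul c φ :=
    { toFun := c • φ.toFun
      dx := c • φ.dx
      memL2 := φ.memL2.const_smul c
      dx_memL2 := φ.dx_memL2.const_smul c
      eq_int := fun x => by
        simp only [Pi.smul_apply, intervalIntegral.integral_smul, φ.eq_int x, smul_add] }

@[simp] lemma smul_toFun (c : ℂ) (φ : H1) : (c • φ).toFun = c • φ.toFun := rfl

@[simp] lemma smul_dx (c : ℂ) (φ : H1) : (c • φ).dx = c • φ.dx := rfl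

lemma toFun_eq_of_gradSq_eq_zero (φ : H1) (h : gradSq φ = 0) (x : ℝ) :
    φ.toFun x = φ.toFun 0 := by
  have hint : Integrable (fun x => ‖φ.dx x‖ ^ 2) volume := by
    simpa [Real.rpow_natCast] using
      φ.dx_memL2.integrable_norm_rpow two_ne_zero ENNReal.ofNat_ne_top
  have hdx : φ.dx =ᵐ[volume] 0 := by
    filter_upwards [(integral_eq_zero_iff_of_nonneg (fun _ => by positivity) hint).1 h]
      with t ht
    simpa using ht
  have hzero : ∫ t in (0 : ℝ)..x, φ.dx t = 0 := by
    rw [intervalIntegral.integral_congr_ae (g := 0) (hdx.mono fun t ht _ => ht)]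
    simp
  rw [φ.eq_int x, hzero, add_zero]

end H1

lemma lpPow_nonneg (p : ℝ) (φ : H1) : 0 ≤ lpPow p φ :=
  integral_nonneg fun _ => by positivity

lemma lpPow_eq_zero_of_toFun_eq_zero {p : ℝ} (hp : p + 1 ≠ 0) {φ : H1} (h : φ.toFun = 0) :
    lpPow p φ = 0 := by
  simp [lpPow, h, Real.zero_rpow hp]

lemma gradSq_smul (c : ℂ) (φ : H1) : gradSq (c • φ) = ‖c‖ ^ 2 * gradSq φ := by
  simp only [gradSq, H1.smul_dx, Pi.smul_apply, norm_smul, mul_pow, integral_const_mul]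

lemma massSq_smul (c : ℂ) (φ : H1) : massSq (c • φ) = ‖c‖ ^ 2 * massSq φ := by
  simp only [massSq, H1.smul_toFun, Pi.smul_apply, norm_smul, mul_pow, integral_const_mul]

lemma lpPow_smul (p : ℝ) (c : ℂ) (φ : H1) : lpPow p (c • φ) = ‖c‖ ^ (p + 1) * lpPow p φ := by
  simp only [lpPow, H1.smul_toFun, Pi.smul_apply, norm_smul,
    Real.mul_rpow (norm_nonneg _) (norm_nonneg _), integral_const_mul]

lemma sq_div_two_sub_rpow_le {p μ : ℝ} (hp : 1 < p) (hμ : 0 ≤ μ) :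
    μ ^ 2 / 2 - μ ^ (p + 1) / (p + 1) ≤ (p - 1) / (2 * (p + 1)) := by
  have hconj : ((p + 1) / 2).HolderConjugate ((p + 1) / (p - 1)) := by
    rw [Real.holderConjugate_iff]
    refine ⟨by rw [lt_div_iff₀ two_pos]; linarith, ?_⟩
    field_simp
    ring
  have hyoung := Real.young_inequality_of_nonneg (sq_nonneg μ) zero_le_one hconj
  have hpow : (μ ^ 2) ^ ((p + 1) / 2) = μ ^ (p + 1) := by
    rw [← Real.rpow_natCast, ← Real.rpow_mul hμ]
    congr 1
    push_cast
    ring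
  rw [hpow, Real.one_rpow, mul_one] at hyoung
  have hp1 : 0 < p + 1 := by linarith
  have hpm : 0 < p - 1 := by linarith
  rw [div_div_eq_mul_div, div_div_eq_mul_div] at hyoung
  field_simp at hyoung ⊢
  nlinarith

section Functionals

variable {p ω γ : ℝ}

lemma Sfun_sub_Ifun_div_two (hp : p + 1 ≠ 0) (φ : H1) :
    Sfun p ω γ φ - Ifun p ω γ φ / 2 = (p - 1) / (2 * (p + 1)) * lpPow p φ := by
  simp only [Sfun, Ifun]
  field_simp
  ring

lemma Sfun_nonneg_of_Pfun_eq_zero (hp : 5 ≤ p) (hγ : γ ≤ 0) (hω : 0 ≤ ω) {φ : H1}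
    (hP : Pfun p γ φ = 0) : 0 ≤ Sfun p ω γ φ := by
  have hp1 : 0 < p + 1 := by linarith
  have hS : Sfun p ω γ φ = Sfun p ω γ φ - Pfun p γ φ / 2 := by rw [hP]; ring
  have hSP : Sfun p ω γ φ - Pfun p γ φ / 2 = -γ / 4 * ‖φ.toFun 0‖ ^ 2
      + ω / 2 * massSq φ + (p - 5) / (4 * (p + 1)) * lpPow p φ := by
    simp only [Sfun, Pfun]
    field_simp
    ring
  rw [hS, hSP]
  have := massSq_nonneg φ
  have := lpPow_nonneg p φ
  have : 0 ≤ (p - 5) / (4 * (p + 1)) := by apply div_nonneg <;> linarith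
  have : 0 ≤ -γ / 4 := by linarith
  positivity

lemma bddBelow_nOmega (hp : 5 ≤ p) (hγ : γ ≤ 0) (hω : 0 ≤ ω) :
    BddBelow {s : ℝ | ∃ φ : H1, φ.toFun ≠ 0 ∧ Pfun p γ φ = 0 ∧ Sfun p ω γ φ = s} := by
  refine ⟨0, ?_⟩
  rintro s ⟨φ, -, hP, rfl⟩
  exact Sfun_nonneg_of_Pfun_eq_zero hp hγ hω hP

lemma Sfun_smul_le_of_Ifun_nonpos (hp : 1 < p) {φ : H1} (hI : Ifun p ω γ φ ≤ 0) (c : ℂ) :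
    Sfun p ω γ (c • φ) ≤ (p - 1) / (2 * (p + 1)) * lpPow p φ := by
  have hp1 : p + 1 ≠ 0 := by linarith
  have hL := lpPow_nonneg p φ
  have hS : Sfun p ω γ (c • φ) = ‖c‖ ^ 2 * Ifun p ω γ φ / 2
      + lpPow p φ * (‖c‖ ^ 2 / 2 - ‖c‖ ^ (p + 1) / (p + 1)) := by
    simp only [Sfun, Ifun, gradSq_smul, massSq_smul, lpPow_smul, H1.smul_toFun,
      Pi.smul_apply, norm_smul]
    field_simp
    ring
  calc Sfun p ω γ (c • φ)
      ≤ lpPow p φ * (‖c‖ ^ 2 / 2 - ‖c‖ ^ (p + 1) / (p + 1)) := by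
        rw [hS]
        have : ‖c‖ ^ 2 * Ifun p ω γ φ ≤ 0 := mul_nonpos_of_nonneg_of_nonpos (by positivity) hI
        linarith
    _ ≤ lpPow p φ * ((p - 1) / (2 * (p + 1))) :=
        mul_le_mul_of_nonneg_left (sq_div_two_sub_rpow_le hp (norm_nonneg c)) hL
    _ = (p - 1) / (2 * (p + 1)) * lpPow p φ := mul_comm _ _

lemma exists_smul_Pfun_eq_zero (hp : 1 < p) (hγ : γ < 0) {φ : H1} (hL : 0 < lpPow p φ) :
    ∃ c : ℂ, c ≠ 0 ∧ Pfun p γ (c • φ) = 0 := by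
  have hp1 : 0 < p + 1 := by linarith
  have hpm : 0 < p - 1 := by linarith
  have hG : 0 < gradSq φ - γ * ‖φ.toFun 0‖ ^ 2 := by
    by_contra! hle
    have hb : 0 ≤ -γ * ‖φ.toFun 0‖ ^ 2 := mul_nonneg (by linarith) (by positivity)
    have hG0 : gradSq φ = 0 := by linarith [gradSq_nonneg φ]
    have h0 : φ.toFun 0 = 0 := by
      have : -γ * ‖φ.toFun 0‖ ^ 2 = 0 := by linarith [gradSq_nonneg φ]
      simpa [hγ.ne] using this
    refine hL.ne' (lpPow_eq_zero_of_toFun_eq_zero hp1.ne' (funext fun x => ?_))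
    rw [φ.toFun_eq_of_gradSq_eq_zero hG0 x, h0, Pi.zero_apply]
  set D := 2 * ((p - 1) / (2 * (p + 1))) * lpPow p φ
  have hD : 0 < D := by positivity
  set μ := ((gradSq φ - γ * ‖φ.toFun 0‖ ^ 2) / D) ^ (p - 1)⁻¹
  have hμ : 0 < μ := by positivity
  have hμp : μ ^ (p - 1) * D = gradSq φ - γ * ‖φ.toFun 0‖ ^ 2 := by
    rw [Real.rpow_inv_rpow (by positivity) hpm.ne']
    field_simp
  refine ⟨μ, by exact_mod_cast hμ.ne', ?_⟩
  have hsplit : μ ^ (p + 1) = μ ^ 2 * μ ^ (p - 1) := by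
    rw [← Real.rpow_natCast, ← Real.rpow_add hμ]
    ring_nf
  simp only [Pfun, gradSq_smul, lpPow_smul, H1.smul_toFun, Pi.smul_apply, norm_smul,
    Complex.norm_real, Real.norm_of_nonneg hμ.le, hsplit]
  linear_combination (-μ ^ 2 / 2) * hμp

lemma nOmega_le_of_Ifun_neg (hp : 5 ≤ p) (hγ : γ < 0) (hω : 0 ≤ ω) {φ : H1}
    (hI : Ifun p ω γ φ < 0) : nOmega p γ ω ≤ (p - 1) / (2 * (p + 1)) * lpPow p φ := by
  have hp1 : 1 < p := by linarith
  have hL : 0 < lpPow p φ := by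
    have := gradSq_nonneg φ
    have : 0 ≤ -γ * ‖φ.toFun 0‖ ^ 2 := mul_nonneg (by linarith) (by positivity)
    have : 0 ≤ ω * massSq φ := mul_nonneg hω (massSq_nonneg φ)
    simp only [Ifun] at hI
    linarith
  obtain ⟨c, hc, hP⟩ := exists_smul_Pfun_eq_zero hp1 hγ hL
  have hcφ : (c • φ).toFun ≠ 0 := by
    intro h
    have hφ : φ.toFun = 0 := by
      rw [H1.smul_toFun] at h
      exact (smul_eq_zero.1 h).resolve_left hc
    exact hL.ne' (lpPow_eq_zero_of_toFun_eq_zero (by linarith) hφ)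
  exact (csInf_le (bddBelow_nOmega hp hγ.le hω) ⟨c • φ, hcφ, hP, rfl⟩).trans
    (Sfun_smul_le_of_Ifun_nonpos hp1 hI.le c)

end Functionals

theorem profiles_in_plus_set_general (p γ ω : ℝ) (hp : 5 < p) (hγ : γ < 0) (hω : 0 < ω)
    (k : ℕ) (φ : ℕ → H1) (Φ : H1)
    (δ ε : ℝ) (hε : 0 < ε) (hεδ : 2 * ε < δ)
    (h1 : Sfun p ω γ Φ ≤ nOmega p γ ω - δ)
    (h2 : (∑ l ∈ Finset.range (k+1), Sfun p ω γ (φ l)) - ε ≤ Sfun p ω γ Φ)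
    (h3 : -ε ≤ Ifun p ω γ Φ)
    (h4 : Ifun p ω γ Φ ≤ (∑ l ∈ Finset.range (k+1), Ifun p ω γ (φ l)) + ε) :
    ∀ l ≤ k, 0 ≤ Sfun p ω γ (φ l) ∧ Sfun p ω γ (φ l) < nOmega p γ ω ∧
      0 ≤ Ifun p ω γ (φ l) := by
  set s := Finset.range (k + 1)
  set C := (p - 1) / (2 * (p + 1))
  have hS_sub_I (i : ℕ) : Sfun p ω γ (φ i) - Ifun p ω γ (φ i) / 2 = C * lpPow p (φ i) :=
    Sfun_sub_Ifun_div_two (by linarith) (φ i)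
  have hCL_nonneg (i : ℕ) : 0 ≤ C * lpPow p (φ i) :=
    mul_nonneg (div_nonneg (by linarith) (by linarith)) (lpPow_nonneg p (φ i))
  have hsum : ∑ i ∈ s, C * lpPow p (φ i) < nOmega p γ ω := by
    simp only [← hS_sub_I, Finset.sum_sub_distrib, ← Finset.sum_div]
    linarith
  have hI (i : ℕ) (hi : i ∈ s) : 0 ≤ Ifun p ω γ (φ i) := by
    by_contra! hneg
    have := nOmega_le_of_Ifun_neg hp.le hγ hω.le hneg
    linarith [Finset.single_le_sum (fun j _ => hCL_nonneg j) hi]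
  have hS (i : ℕ) (hi : i ∈ s) : 0 ≤ Sfun p ω γ (φ i) := by
    linarith [hS_sub_I i, hCL_nonneg i, hI i hi]
  intro l hl
  have hl : l ∈ s := Finset.mem_range.2 (Nat.lt_succ_of_le hl)
  refine ⟨hS l hl, ?_, hI l hl⟩
  linarith [Finset.single_le_sum hS hl]

/-- if the sum `Φ = Σ_{l=0}^k φ_l` of `H¹` functions satisfies the four
almost-orthogonality inequalities below `n_ω − δ`, then every summand `φ_l` satisfies
`0 ≤ S_{ω,γ}(φ_l) < n_ω` and `I_{ω,γ}(φ_l) ≥ 0`. -/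
theorem profiles_in_plus_set (p γ ω : ℝ) (hp : 5 < p) (hγ : γ < 0) (hω : 0 < ω)
    (k : ℕ) (φ : ℕ → H1) (Φ : H1)
    (hΦ : ∀ x : ℝ, Φ.toFun x = ∑ l ∈ Finset.range (k+1), (φ l).toFun x)
    (hΦdx : ∀ x : ℝ, Φ.dx x = ∑ l ∈ Finset.range (k+1), (φ l).dx x)
    (δ ε : ℝ) (hδ : 0 < δ) (hε : 0 < ε) (hεδ : 2 * ε < δ)
    (h1 : Sfun p ω γ Φ ≤ nOmega p γ ω - δ)
    (h2 : (∑ l ∈ Finset.range (k+1), Sfun p ω γ (φ l)) - ε ≤ Sfun p ω γ Φ)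
    (h3 : -ε ≤ Ifun p ω γ Φ)
    (h4 : Ifun p ω γ Φ ≤ (∑ l ∈ Finset.range (k+1), Ifun p ω γ (φ l)) + ε) :
    ∀ l ≤ k, 0 ≤ Sfun p ω γ (φ l) ∧ Sfun p ω γ (φ l) < nOmega p γ ω ∧
      0 ≤ Ifun p ω γ (φ l) :=
  profiles_in_plus_set_general p γ ω hp hγ hω k φ Φ δ ε hε hεδ h1 h2 h3 h4
end
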